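/- Descent lemma for projected gradient descent: if f : ℝⁿ → ℝ is L-smooth (L > 0), C ⊆ ℝⁿ is nonempty closed convex, x ∈ C, η = 1/L, x⁺ = Proj_C(x - η∇f(x)), and G = (x - x⁺)/η, then f(x⁺) ≤ f(x) - (1/(2L))‖G‖². -/

import Mathlib

/-!
Along the segment from `a` to `b`, the gap between `f` and its quadratic model
`f a + ⟪∇f a, b - a⟫ + L/2 ‖b - a‖²` has nonpositive derivative because `∇f` is `L`-Lipschitz,
so `f b` lies below the model. Testing the variational inequality of the projection
`x⁺ = Proj_C (x - ∇f x / L)` at `x ∈ C` gives `L ‖x - x⁺‖² ≤ ⟪∇f x, x - x⁺⟫`; with `b = x⁺` the linear term then absorbs twice the quadratic one.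
-/

open Set
open scoped InnerProductSpace Gradient

section Smooth

variable {F : Type*} [NormedAddCommGroup F] [InnerProductSpace ℝ F] [CompleteSpace F]

theorem Differentiable.hasDerivAt_comp_add_smul {f : F → ℝ} (hf : Differentiable ℝ f)
    (a v : F) (t : ℝ) :
    HasDerivAt (fun s : ℝ => f (a + s • v)) ⟪∇ f (a + t • v), v⟫_ℝ t := by
  have hline : HasDerivAt (fun s : ℝ => a + s • v) v t := by
    simpa using ((hasDerivAt_id t).smul_const v).const_add a
  exact (hf (a + t • v)).hasGradientAt.hasFDerivAt.comp_hasDerivAt t hline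

theorem le_add_inner_gradient_add_of_lipschitz_gradient {f : F → ℝ} {L : ℝ}
    (hf : Differentiable ℝ f) (hlip : ∀ x y, ‖∇ f x - ∇ f y‖ ≤ L * ‖x - y‖) (a b : F) :
    f b ≤ f a + ⟪∇ f a, b - a⟫_ℝ + L / 2 * ‖b - a‖ ^ 2 := by
  set v := b - a
  set φ : ℝ → ℝ := fun t => f (a + t • v) - t * ⟪∇ f a, v⟫_ℝ - L / 2 * t ^ 2 * ‖v‖ ^ 2
  have hφ (t : ℝ) : HasDerivAt φ
      (⟪∇ f (a + t • v), v⟫_ℝ - ⟪∇ f a, v⟫_ℝ - L * t * ‖v‖ ^ 2) t := by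
    refine (((hf.hasDerivAt_comp_add_smul a v t).sub
      ((hasDerivAt_id t).mul_const ⟪∇ f a, v⟫_ℝ)).sub
      (((hasDerivAt_pow 2 t).const_mul (L / 2)).mul_const (‖v‖ ^ 2))).congr_deriv ?_
    simp only [one_mul, Nat.cast_ofNat, pow_one, Nat.add_one_sub_one]
    ring
  have hφ_nonpos (t : ℝ) (ht : 0 ≤ t) :
      ⟪∇ f (a + t • v), v⟫_ℝ - ⟪∇ f a, v⟫_ℝ - L * t * ‖v‖ ^ 2 ≤ 0 := by
    have := hlip (a + t • v) a
    rw [add_sub_cancel_left, norm_smul, Real.norm_of_nonneg ht] at this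
    rw [← inner_sub_left]
    nlinarith [real_inner_le_norm (∇ f (a + t • v) - ∇ f a) v, norm_nonneg v]
  have hanti : AntitoneOn φ (Icc 0 1) :=
    antitoneOn_of_hasDerivWithinAt_nonpos (convex_Icc 0 1)
      (HasDerivAt.continuousOn fun t _ => hφ t) (fun t _ => (hφ t).hasDerivWithinAt)
      (fun t ht => hφ_nonpos t (interior_subset ht).1)
  have hφ01 := hanti (left_mem_Icc.2 zero_le_one) (right_mem_Icc.2 zero_le_one) zero_le_one
  simp only [φ, zero_smul, one_smul, add_zero, add_sub_cancel, v] at hφ01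
  linarith

end Smooth

section Projection

variable {F : Type*} [NormedAddCommGroup F] [InnerProductSpace ℝ F]

theorem real_inner_sub_le_zero_of_forall_norm_sub_le {K : Set F} (hK : Convex ℝ K) {u p w : F}
    (hp : p ∈ K) (hmin : ∀ w ∈ K, ‖u - p‖ ≤ ‖u - w‖) (hw : w ∈ K) :
    ⟪u - p, w - p⟫_ℝ ≤ 0 := by
  have : Nonempty K := ⟨⟨p, hp⟩⟩
  have hinf : ‖u - p‖ = ⨅ w : K, ‖u - w‖ :=
    le_antisymm (le_ciInf fun w => hmin w w.2)
      (ciInf_le ⟨0, forall_mem_range.2 fun _ => norm_nonneg _⟩ (⟨p, hp⟩ : K))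
  exact (norm_eq_iInf_iff_real_inner_le_zero hK hp).1 hinf w hw

theorem sq_norm_sub_le_mul_inner_of_forall_norm_sub_le {K : Set F} (hK : Convex ℝ K)
    {x p g : F} {η : ℝ} (hx : x ∈ K) (hp : p ∈ K)
    (hmin : ∀ w ∈ K, ‖x - η • g - p‖ ≤ ‖x - η • g - w‖) :
    ‖x - p‖ ^ 2 ≤ η * ⟪g, x - p⟫_ℝ := by
  have h := real_inner_sub_le_zero_of_forall_norm_sub_le hK hp hmin hx
  rw [sub_right_comm, inner_sub_left, real_inner_smul_left, real_inner_self_eq_norm_sq] at h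
  linarith

end Projection

theorem pgd_descent_lemma_general
    {n : ℕ} (C : Set (EuclideanSpace ℝ (Fin n)))
    (hconv : Convex ℝ C)
    (f : EuclideanSpace ℝ (Fin n) → ℝ) (L : ℝ) (hL : 0 < L)
    (hdiff : Differentiable ℝ f)
    (hlip : ∀ x y : EuclideanSpace ℝ (Fin n),
      ‖gradient f x - gradient f y‖ ≤ L * ‖x - y‖)
    (x xplus : EuclideanSpace ℝ (Fin n)) (hx : x ∈ C) (hxplus : xplus ∈ C)
    (hmin : ∀ w ∈ C,
      ‖x - (1 / L) • gradient f x - xplus‖ ≤ ‖x - (1 / L) • gradient f x - w‖)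
    (G : EuclideanSpace ℝ (Fin n)) (hG : G = L • (x - xplus)) :
    f xplus ≤ f x - 1 / (2 * L) * ‖G‖ ^ 2 := by
  have hdesc := le_add_inner_gradient_add_of_lipschitz_gradient hdiff hlip x xplus
  have hstep : L * ‖x - xplus‖ ^ 2 ≤ ⟪∇ f x, x - xplus⟫_ℝ := by
    rw [← le_div_iff₀' hL, div_eq_inv_mul, ← one_div]
    exact sq_norm_sub_le_mul_inner_of_forall_norm_sub_le hconv hx hxplus hmin
  have hGsq : 1 / (2 * L) * ‖G‖ ^ 2 = L / 2 * ‖x - xplus‖ ^ 2 := by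
    rw [hG, norm_smul, Real.norm_of_nonneg hL.le]
    field_simp
  rw [hGsq]
  rw [← neg_sub x xplus, inner_neg_right, norm_neg] at hdesc
  linarith

/-- Descent lemma for projected gradient descent: if `f` is `L`-smooth,
`x ∈ C`, `η = 1/L`, `x⁺ = Proj_C (x - η ∇f x)` and `G = L (x - x⁺)`, then
`f x⁺ ≤ f x - (1/(2L)) ‖G‖²`. -/
theorem pgd_descent_lemma
    {n : ℕ} (C : Set (EuclideanSpace ℝ (Fin n)))
    (hne : C.Nonempty) (hclosed : IsClosed C) (hconv : Convex ℝ C)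
    (f : EuclideanSpace ℝ (Fin n) → ℝ) (L : ℝ) (hL : 0 < L)
    (hdiff : Differentiable ℝ f)
    (hlip : ∀ x y : EuclideanSpace ℝ (Fin n),
      ‖gradient f x - gradient f y‖ ≤ L * ‖x - y‖)
    (x xplus : EuclideanSpace ℝ (Fin n)) (hx : x ∈ C) (hxplus : xplus ∈ C)
    (hmin : ∀ w ∈ C,
      ‖x - (1 / L) • gradient f x - xplus‖ ≤ ‖x - (1 / L) • gradient f x - w‖)
    (G : EuclideanSpace ℝ (Fin n)) (hG : G = L • (x - xplus)) :
    f xplus ≤ f x - 1 / (2 * L) * ‖G‖ ^ 2 :=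
  pgd_descent_lemma_general C hconv f L hL hdiff hlip x xplus hx hxplus hmin G hG
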